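/- arXiv:dg-ga/9710030 — 2 statements merged into one kernel-verified Lean document; each statement's English description precedes it below -/
import Mathlib

section
/- Let (A,q,M) be a smooth vector bundle and ξ a vector field on A whose (local) flows φ_t are local vector bundle automorphisms of A covering a local flow f_t on M. Then (ξ, x) is a linear vector field, where x is the vector field on M generated by f_t; in particular ξ(X+Y) = ξ(X) ⧺ ξ(Y) and ξ(tX) = t·ξ(X) for X,Y in the same fibre and t ∈ ℝ, where ⧺ and · denote the addition and scalar multiplication of the bundle TA → TM obtained by applying the tangent functor to the operations of A. -/
/- STATEMENT 1.  Local model of a vector bundle `(A, q, M)`: total space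
`E × F` over base `E`, with `q` the first projection.  A vector field on
the total space is a map `ξ : E × F → E × F` (principal part), its value
at `p` being a tangent vector at `p`; as a map `A → TA` it is
`p ↦ (p, ξ p)`.  In the bundle `TA → TM` obtained by applying the tangent
functor to the operations of `A`, the sum `⧺` of two tangent vectors
`((e,v),(u,w))` and `((e,v'),(u,w'))` with the same image `(e,u)` in `TM`
is `((e, v + v'), (u, w + w'))`, and similarly for scalar multiplication.
Hypotheses: `φ : ℝ → A → A` is a (global) flow of `ξ` by vector bundle
morphisms of `A` covering a flow `f : ℝ → E → E` on the base, and `x` is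
the vector field on the base generated by `f`.  Conclusion: `(ξ, x)` is a
linear vector field, i.e. `ξ : A → TA` is a vector bundle morphism over
`x : M → TM`: it projects to `x`, and `ξ(X + Y) = ξ X ⧺ ξ Y`,
`ξ (t • X) = t ⬝ ξ X` for `X, Y` in one fibre. -/
private lemma hasDerivAt_fst {E F : Type*} [NormedAddCommGroup E] [NormedSpace ℝ E]
    [NormedAddCommGroup F] [NormedSpace ℝ F] {f : ℝ → E × F} {f' : E × F} {x : ℝ}
    (h : HasDerivAt f f' x) : HasDerivAt (fun s => (f s).1) f'.1 x := by
  exact ((ContinuousLinearMap.fst ℝ E F).hasFDerivAt).comp_hasDerivAt x h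

private lemma hasDerivAt_snd {E F : Type*} [NormedAddCommGroup E] [NormedSpace ℝ E]
    [NormedAddCommGroup F] [NormedSpace ℝ F] {f : ℝ → E × F} {f' : E × F} {x : ℝ}
    (h : HasDerivAt f f' x) : HasDerivAt (fun s => (f s).2) f'.2 x := by
  exact ((ContinuousLinearMap.snd ℝ E F).hasFDerivAt).comp_hasDerivAt x h

theorem flows_by_bundle_automorphisms_give_linear_vector_field
    {E F : Type*} [NormedAddCommGroup E] [NormedSpace ℝ E]
    [NormedAddCommGroup F] [NormedSpace ℝ F]
    (ξ : E × F → E × F) (hξ : ContDiff ℝ (⊤ : ℕ∞) ξ)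
    (φ : ℝ → E × F → E × F) (f : ℝ → E → E) (x : E → E)
    -- `φ` is a flow for `ξ`:
    (hφ0 : ∀ p, φ 0 p = p)
    (hφ' : ∀ t p, HasDerivAt (fun s => φ s p) (ξ (φ t p)) t)
    -- `f` is a flow on the base generating the vector field `x`:
    (hf0 : ∀ e, f 0 e = e)
    (hf' : ∀ t e, HasDerivAt (fun s => f s e) (x (f t e)) t)
    -- each `φ t` is a vector bundle automorphism of `A` over `f t`:
    (hbij : ∀ t, Function.Bijective (φ t))
    (hcover : ∀ t e v, (φ t (e, v)).1 = f t e)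
    (hfiblin : ∀ t e, IsLinearMap ℝ (fun v : F => (φ t (e, v)).2)) :
    -- `(ξ, x)` is a linear vector field:
    (∀ e v, (ξ (e, v)).1 = x e) ∧
    (∀ (e : E) (v w : F),
        ξ (e, v + w) = ((ξ (e, v)).1, (ξ (e, v)).2 + (ξ (e, w)).2)) ∧
    (∀ (e : E) (t : ℝ) (v : F),
        ξ (e, t • v) = ((ξ (e, v)).1, t • (ξ (e, v)).2)) := by
  -- `ξ p` is the derivative of the flow at time `0`.
  have hderiv : ∀ p : E × F, HasDerivAt (fun s => φ s p) (ξ p) 0 := by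
    intro p
    have := hφ' 0 p
    rwa [hφ0 p] at this
  have hx : ∀ e : E, HasDerivAt (fun s => f s e) (x e) 0 := by
    intro e
    have := hf' 0 e
    rwa [hf0 e] at this
  refine ⟨?_, ?_, ?_⟩
  · intro e v
    have h1 : HasDerivAt (fun s => (φ s (e, v)).1) (ξ (e, v)).1 0 :=
      hasDerivAt_fst (hderiv (e, v))
    have h2 : HasDerivAt (fun s => (φ s (e, v)).1) (x e) 0 := by
      simpa only [hcover] using hx e
    exact h1.unique h2
  · intro e v w
    have h1 : HasDerivAt (fun s => φ s (e, v + w)) (ξ (e, v + w)) 0 :=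
      hderiv (e, v + w)
    have h2 : HasDerivAt (fun s => φ s (e, v + w))
        (((ξ (e, v)).1, (ξ (e, v)).2 + (ξ (e, w)).2)) 0 := by
      have heq : (fun s => φ s (e, v + w)) =
          fun s => ((φ s (e, v)).1, (φ s (e, v)).2 + (φ s (e, w)).2) := by
        funext s
        have := (hfiblin s e).map_add v w
        ext
        · simp [hcover]
        · exact this
      rw [heq]
      exact ((hasDerivAt_fst (hderiv (e, v))).prodMk ((hasDerivAt_snd (hderiv (e, v))).add (hasDerivAt_snd (hderiv (e, w)))))
    exact h1.unique h2
  · intro e t v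
    have h1 : HasDerivAt (fun s => φ s (e, t • v)) (ξ (e, t • v)) 0 :=
      hderiv (e, t • v)
    have h2 : HasDerivAt (fun s => φ s (e, t • v))
        (((ξ (e, v)).1, t • (ξ (e, v)).2)) 0 := by
      have heq : (fun s => φ s (e, t • v)) =
          fun s => ((φ s (e, v)).1, t • (φ s (e, v)).2) := by
        funext s
        have := (hfiblin s e).map_smul t v
        ext
        · simp [hcover]
        · exact this
      rw [heq]
      exact ((hasDerivAt_fst (hderiv (e, v))).prodMk ((hasDerivAt_snd (hderiv (e, v))).const_smul t))
    exact h1.unique h2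
end

section
/- On a Lie groupoid G ⇉ M, for every vector field x on M there exists a star vector field (ξ,x) on G, i.e. a vector field ξ on G with T(α)∘ξ = x∘α and ξ∘1 = T(1)∘x. -/
open Manifold

/- STATEMENT 13.  `G ⇉ M` is a Lie groupoid; in particular the source map
`α` is a surjective submersion and `1 : M → G` is the identity section.
The theorem: every vector field `x` on `M` lifts to a *star vector field*
`(ξ, x)` on `G`, i.e. a smooth vector field `ξ` on `G` with
`T(α) ∘ ξ = x ∘ α` and `ξ ∘ 1 = T(1) ∘ x`. -/

/-- A Lie groupoid `G ⇉ M` over smooth manifolds (multiplication idealized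
as a total smooth map, with the groupoid laws imposed on composable
pairs `src h = trg g`, the only pairs ever used below). -/
structure LieGroupoidStr (EG EM : Type*) [NormedAddCommGroup EG] [NormedSpace ℝ EG]
    [NormedAddCommGroup EM] [NormedSpace ℝ EM]
    (G M : Type*) [TopologicalSpace G] [ChartedSpace EG G]
    [TopologicalSpace M] [ChartedSpace EM M] where
  src : G → M
  trg : G → M
  one : M → G
  inv : G → G
  mul : G × G → G
  smooth_src : ContMDiff 𝓘(ℝ, EG) 𝓘(ℝ, EM) (⊤ : ℕ∞) src
  smooth_trg : ContMDiff 𝓘(ℝ, EG) 𝓘(ℝ, EM) (⊤ : ℕ∞) trg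
  smooth_one : ContMDiff 𝓘(ℝ, EM) 𝓘(ℝ, EG) (⊤ : ℕ∞) one
  smooth_inv : ContMDiff 𝓘(ℝ, EG) 𝓘(ℝ, EG) (⊤ : ℕ∞) inv
  smooth_mul : ContMDiff (𝓘(ℝ, EG).prod 𝓘(ℝ, EG)) 𝓘(ℝ, EG) (⊤ : ℕ∞) mul
  src_one : ∀ m, src (one m) = m
  trg_one : ∀ m, trg (one m) = m
  src_mul : ∀ h g, src h = trg g → src (mul (h, g)) = src g
  trg_mul : ∀ h g, src h = trg g → trg (mul (h, g)) = trg h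
  mul_one : ∀ g, mul (g, one (src g)) = g
  one_mul : ∀ g, mul (one (trg g), g) = g
  mul_assoc : ∀ k h g, src k = trg h → src h = trg g →
    mul (mul (k, h), g) = mul (k, mul (h, g))
  src_inv : ∀ g, src (inv g) = trg g
  trg_inv : ∀ g, trg (inv g) = src g
  mul_inv : ∀ g, mul (g, inv g) = one (trg g)
  inv_mul : ∀ g, mul (inv g, g) = one (src g)

variable {EG EM : Type*} [NormedAddCommGroup EG] [NormedSpace ℝ EG]
  [NormedAddCommGroup EM] [NormedSpace ℝ EM]
  {G M : Type*} [TopologicalSpace G] [ChartedSpace EG G]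
  [IsManifold 𝓘(ℝ, EG) (⊤ : ℕ∞) G]
  [TopologicalSpace M] [ChartedSpace EM M]
  [IsManifold 𝓘(ℝ, EM) (⊤ : ℕ∞) M]

/-- `(ξ, x)` is a multiplicative vector field on the Lie groupoid `S`:
`ξ : G → TG` is a morphism of Lie groupoids over `x : M → TM` into the
tangent groupoid `TG ⇉ TM`. -/
def IsMultiplicativeVF (S : LieGroupoidStr EG EM G M)
    (ξ : ∀ g : G, TangentSpace 𝓘(ℝ, EG) g)
    (x : ∀ m : M, TangentSpace 𝓘(ℝ, EM) m) : Prop :=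
  (∀ g, mfderiv 𝓘(ℝ, EG) 𝓘(ℝ, EM) S.src g (ξ g) = x (S.src g)) ∧
  (∀ g, mfderiv 𝓘(ℝ, EG) 𝓘(ℝ, EM) S.trg g (ξ g) = x (S.trg g)) ∧
  (∀ h g, S.src h = S.trg g →
    ξ (S.mul (h, g)) =
      mfderiv (𝓘(ℝ, EG).prod 𝓘(ℝ, EG)) 𝓘(ℝ, EG) S.mul (h, g) (ξ h, ξ g))

/-! The conditions on a star vector field are affine in each fibre, so a partition of unity
reduces the theorem to finding star vector fields locally. Near `g₀`, a smooth right inverse `σ`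
of `T(α)` written in charts turns any local vector field `v` into the lift `v + σ (x ∘ α - T(α) v)`
of `x ∘ α`, which equals `v` wherever `v` already lifts `x ∘ α`. Away from the units take
`v = 0`; near a unit, take for `v g` the vector `T(1) (x (α g))` transported to `g` through the
chart at `g₀`: on units it is `T(1) x`, which lifts `x ∘ α` because `α ∘ 1 = id`. -/

open Set Function Bundle Topology Filter

section TangentCoordinates

variable {EX : Type*} [NormedAddCommGroup EX] [NormedSpace ℝ EX]
  {X : Type*} [TopologicalSpace X] [ChartedSpace EX X] [IsManifold 𝓘(ℝ, EX) (⊤ : ℕ∞) X]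
  {EN : Type*} [NormedAddCommGroup EN] [NormedSpace ℝ EN]
  {N : Type*} [TopologicalSpace N] [ChartedSpace EN N]

theorem tangentCoordChange_tangentCoordChange {x y z : X}
    (hx : z ∈ (chartAt EX x).source) (hy : z ∈ (chartAt EX y).source) (v : EX) :
    tangentCoordChange 𝓘(ℝ, EX) y x z (tangentCoordChange 𝓘(ℝ, EX) x y z v) = v := by
  rw [tangentCoordChange_comp ⟨⟨by simpa using hx, by simpa using hy⟩, by simpa using hx⟩]
  exact tangentCoordChange_self (by simpa using hx)

theorem contMDiffAt_tangentCoordChange {p q : X} {f : N → X} {n₀ : N}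
    (hf : ContMDiffAt 𝓘(ℝ, EN) 𝓘(ℝ, EX) (⊤ : ℕ∞) f n₀)
    (hp : f n₀ ∈ (chartAt EX p).source) (hq : f n₀ ∈ (chartAt EX q).source) :
    ContMDiffAt 𝓘(ℝ, EN) 𝓘(ℝ, EX →L[ℝ] EX) (⊤ : ℕ∞)
      (fun n => tangentCoordChange 𝓘(ℝ, EX) p q (f n)) n₀ := by
  -- instance search does not see that `⊤ + 1 = ⊤`, which this instance needs
  have := tangentBundleCore.isContMDiff (I := 𝓘(ℝ, EX)) (M := X) (n := ((⊤ : ℕ∞) : WithTop ℕ∞))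
    (h := (inferInstance : IsManifold 𝓘(ℝ, EX) ((⊤ : ℕ∞) : WithTop ℕ∞) X))
  have hcoord := (tangentBundleCore 𝓘(ℝ, EX) X).contMDiffOn_coordChange
    (n := ((⊤ : ℕ∞) : WithTop ℕ∞)) 𝓘(ℝ, EX) (achart EX p) (achart EX q)
  refine (hcoord.contMDiffAt ?_).comp n₀ hf
  exact ((chartAt EX p).open_source.inter (chartAt EX q).open_source).mem_nhds ⟨hp, hq⟩

theorem ContMDiffAt.tangentCoordChange_snd {Ψ : N → TangentBundle 𝓘(ℝ, EX) X} {n₀ : N}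
    (hΨ : ContMDiffAt 𝓘(ℝ, EN) 𝓘(ℝ, EX).tangent (⊤ : ℕ∞) Ψ n₀) {q : X}
    (hq : (Ψ n₀).proj ∈ (chartAt EX q).source) :
    ContMDiffAt 𝓘(ℝ, EN) 𝓘(ℝ, EX) (⊤ : ℕ∞)
      (fun n => tangentCoordChange 𝓘(ℝ, EX) (Ψ n).proj q (Ψ n).proj (Ψ n).2) n₀ :=
  (((trivializationAt EX (TangentSpace 𝓘(ℝ, EX)) q).contMDiffAt_iff
    ((trivializationAt EX (TangentSpace 𝓘(ℝ, EX)) q).mem_source.2 hq)).1 hΨ).2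

theorem contMDiffAt_tangentCoordChange_section {θ : X → EX} {x₀ x₁ : X}
    (hx₁ : x₁ ∈ (chartAt EX x₀).source) (hθ : ContMDiffAt 𝓘(ℝ, EX) 𝓘(ℝ, EX) (⊤ : ℕ∞) θ x₁) :
    ContMDiffAt 𝓘(ℝ, EX) 𝓘(ℝ, EX).tangent (⊤ : ℕ∞)
      (fun x => (⟨x, tangentCoordChange 𝓘(ℝ, EX) x₀ x x (θ x)⟩ : TangentBundle 𝓘(ℝ, EX) X))
      x₁ := by
  refine ((trivializationAt EX (TangentSpace 𝓘(ℝ, EX)) x₀).contMDiffAt_section_iff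
    (IB := 𝓘(ℝ, EX)) (E := TangentSpace 𝓘(ℝ, EX))
    (s := fun x => (tangentCoordChange 𝓘(ℝ, EX) x₀ x x (θ x) : TangentSpace 𝓘(ℝ, EX) x))
    hx₁).2 (hθ.congr_of_eventuallyEq ?_)
  filter_upwards [(chartAt EX x₀).open_source.mem_nhds hx₁] with x hx
  exact tangentCoordChange_tangentCoordChange hx (mem_chart_source EX x) (θ x)

end TangentCoordinates

section RightInverse

variable {E F : Type*} [NormedAddCommGroup E] [NormedSpace ℝ E] [FiniteDimensional ℝ E]
  [NormedAddCommGroup F] [NormedSpace ℝ F]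
  {EN : Type*} [NormedAddCommGroup EN] [NormedSpace ℝ EN]
  {N : Type*} [TopologicalSpace N] [ChartedSpace EN N]

theorem exists_contMDiffOn_rightInverse {A : N → E →L[ℝ] F} {s : Set N} {x₀ : N}
    (hs : IsOpen s) (hA : ContMDiffOn 𝓘(ℝ, EN) 𝓘(ℝ, E →L[ℝ] F) (⊤ : ℕ∞) A s) (hx₀ : x₀ ∈ s)
    (hsurj : Surjective (A x₀)) :
    ∃ U ⊆ s, IsOpen U ∧ x₀ ∈ U ∧ ∃ σ : N → F →L[ℝ] E,
      ContMDiffOn 𝓘(ℝ, EN) 𝓘(ℝ, F →L[ℝ] E) (⊤ : ℕ∞) σ U ∧ ∀ x ∈ U, ∀ v, A x (σ x v) = v := by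
  have : FiniteDimensional ℝ F := Module.Finite.of_surjective (A x₀ : E →ₗ[ℝ] F) hsurj
  obtain ⟨C, hC⟩ := (A x₀).exists_rightInverse_of_surjective (LinearMap.range_eq_top.2 hsurj)
  -- `A x ∘ C` is invertible at `x₀`, hence near `x₀`, and `C ∘ (A x ∘ C)⁻¹` is a right inverse
  have hAC : ContMDiffOn 𝓘(ℝ, EN) 𝓘(ℝ, F →L[ℝ] F) (⊤ : ℕ∞) (fun x => A x ∘L C) s :=
    hA.clm_comp contMDiffOn_const
  refine ⟨s ∩ (fun x => A x ∘L C) ⁻¹' {B | IsUnit B}, inter_subset_left,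
    hAC.continuousOn.isOpen_inter_preimage hs Units.isOpen,
    ⟨hx₀, by rw [mem_preimage, hC]; exact isUnit_one (M := F →L[ℝ] F)⟩,
    fun x => C ∘L Ring.inverse (A x ∘L C), ?_, ?_⟩
  · rintro x ⟨hxs, hunit⟩
    obtain ⟨u, hu⟩ : IsUnit (A x ∘L C) := hunit
    have hinv : ContMDiffAt 𝓘(ℝ, EN) 𝓘(ℝ, F →L[ℝ] F) (⊤ : ℕ∞)
        (fun x => Ring.inverse (A x ∘L C)) x :=
      ContDiffAt.comp_contMDiffAt (by rw [← hu]; exact contDiffAt_ringInverse ℝ u)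
        (hAC.contMDiffAt (hs.mem_nhds hxs))
    exact (contMDiffAt_const.clm_comp hinv).contMDiffWithinAt
  · rintro x ⟨-, hunit⟩ v
    exact congr($(Ring.mul_inverse_cancel _ hunit) v)

end RightInverse

section Submersion

variable {EX : Type*} [NormedAddCommGroup EX] [NormedSpace ℝ EX]
  {X : Type*} [TopologicalSpace X] [ChartedSpace EX X] [IsManifold 𝓘(ℝ, EX) (⊤ : ℕ∞) X]
  {EY : Type*} [NormedAddCommGroup EY] [NormedSpace ℝ EY]
  {Y : Type*} [TopologicalSpace Y] [ChartedSpace EY Y] [IsManifold 𝓘(ℝ, EY) (⊤ : ℕ∞) Y]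

theorem inTangentCoordinates_mfderiv_apply {f : X → Y} {x₀ x : X}
    (hx : x ∈ (chartAt EX x₀).source) (hfx : f x ∈ (chartAt EY (f x₀)).source) (v : EX) :
    inTangentCoordinates 𝓘(ℝ, EX) 𝓘(ℝ, EY) id f (mfderiv 𝓘(ℝ, EX) 𝓘(ℝ, EY) f) x₀ x v =
      tangentCoordChange 𝓘(ℝ, EY) (f x) (f x₀) (f x)
        (mfderiv 𝓘(ℝ, EX) 𝓘(ℝ, EY) f x (tangentCoordChange 𝓘(ℝ, EX) x₀ x x v)) := by
  erw [inTangentCoordinates_eq id f _ hx hfx]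
  rfl

theorem ContMDiffAt.mfderiv_const_of_mem_chartAt {f : X → Y} {x₀ x₁ : X}
    (hf : ContMDiffAt 𝓘(ℝ, EX) 𝓘(ℝ, EY) (⊤ : ℕ∞) f x₁) (hx₁ : x₁ ∈ (chartAt EX x₀).source)
    (hfx₁ : f x₁ ∈ (chartAt EY (f x₀)).source) :
    ContMDiffAt 𝓘(ℝ, EX) 𝓘(ℝ, EX →L[ℝ] EY) (⊤ : ℕ∞)
      (inTangentCoordinates 𝓘(ℝ, EX) 𝓘(ℝ, EY) id f (mfderiv 𝓘(ℝ, EX) 𝓘(ℝ, EY) f) x₀) x₁ := by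
  have hrepin : inTangentCoordinates 𝓘(ℝ, EX) 𝓘(ℝ, EY) id f (mfderiv 𝓘(ℝ, EX) 𝓘(ℝ, EY) f) x₀
      =ᶠ[𝓝 x₁] fun x => tangentCoordChange 𝓘(ℝ, EY) (f x₁) (f x₀) (f x) ∘L
        inTangentCoordinates 𝓘(ℝ, EX) 𝓘(ℝ, EY) id f (mfderiv 𝓘(ℝ, EX) 𝓘(ℝ, EY) f) x₁ x ∘L
        tangentCoordChange 𝓘(ℝ, EX) x₀ x₁ x := by
    have hf' : ∀ᶠ x in 𝓝 x₁, f x ∈ (chartAt EY (f x₀)).source ∩ (chartAt EY (f x₁)).source :=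
      hf.continuousAt.preimage_mem_nhds (((chartAt EY (f x₀)).open_source.inter
        (chartAt EY (f x₁)).open_source).mem_nhds ⟨hfx₁, mem_chart_source EY (f x₁)⟩)
    filter_upwards [hf', ((chartAt EX x₀).open_source.inter (chartAt EX x₁).open_source).mem_nhds
      ⟨hx₁, mem_chart_source EX x₁⟩] with x ⟨hfx₀, hfx₁⟩ ⟨hx₀, hx₁⟩
    ext v
    simp only [ContinuousLinearMap.comp_apply]
    rw [inTangentCoordinates_mfderiv_apply hx₀ hfx₀, inTangentCoordinates_mfderiv_apply hx₁ hfx₁,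
      tangentCoordChange_comp
        (by simp only [extChartAt_source]; exact ⟨⟨hx₀, hx₁⟩, mem_chart_source EX x⟩)]
    exact (tangentCoordChange_comp (I := 𝓘(ℝ, EY))
      (by simp only [extChartAt_source]; exact ⟨⟨mem_chart_source EY (f x), hfx₁⟩, hfx₀⟩)).symm
  refine ContMDiffAt.congr_of_eventuallyEq ?_ hrepin
  exact (contMDiffAt_tangentCoordChange hf (mem_chart_source EY (f x₁)) hfx₁).clm_comp
    ((hf.mfderiv_const le_rfl).clm_comp
      (contMDiffAt_tangentCoordChange contMDiffAt_id hx₁ (mem_chart_source EX x₁)))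

theorem exists_contMDiffOn_lift_of_surjective_mfderiv [FiniteDimensional ℝ EX] {f : X → Y}
    (hf : ContMDiff 𝓘(ℝ, EX) 𝓘(ℝ, EY) (⊤ : ℕ∞) f) {x₀ : X}
    (hsurj : Surjective (mfderiv 𝓘(ℝ, EX) 𝓘(ℝ, EY) f x₀))
    {y : ∀ x : X, TangentSpace 𝓘(ℝ, EY) (f x)}
    (hy : ContMDiff 𝓘(ℝ, EX) 𝓘(ℝ, EY).tangent (⊤ : ℕ∞)
      (fun x => (⟨f x, y x⟩ : TangentBundle 𝓘(ℝ, EY) Y)))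
    {v : ∀ x : X, TangentSpace 𝓘(ℝ, EX) x}
    (hv : ∀ᶠ x in 𝓝 x₀, ContMDiffAt 𝓘(ℝ, EX) 𝓘(ℝ, EX).tangent (⊤ : ℕ∞)
      (fun x => (⟨x, v x⟩ : TangentBundle 𝓘(ℝ, EX) X)) x) :
    ∃ U ∈ 𝓝 x₀, ∃ s : ∀ x : X, TangentSpace 𝓘(ℝ, EX) x,
      ContMDiffOn 𝓘(ℝ, EX) 𝓘(ℝ, EX).tangent (⊤ : ℕ∞)
        (fun x => (⟨x, s x⟩ : TangentBundle 𝓘(ℝ, EX) X)) U ∧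
      ∀ x ∈ U, mfderiv 𝓘(ℝ, EX) 𝓘(ℝ, EY) f x (s x) = y x ∧
        (mfderiv 𝓘(ℝ, EX) 𝓘(ℝ, EY) f x (v x) = y x → s x = v x) := by
  obtain ⟨W, hWv, hWo, hx₀W⟩ := eventually_nhds_iff.1 hv
  set A := inTangentCoordinates 𝓘(ℝ, EX) 𝓘(ℝ, EY) id f (mfderiv 𝓘(ℝ, EX) 𝓘(ℝ, EY) f) x₀
  set U₁ := W ∩ (chartAt EX x₀).source ∩ f ⁻¹' (chartAt EY (f x₀)).source
  have hU₁ : IsOpen U₁ := (hWo.inter (chartAt EX x₀).open_source).inter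
    (hf.continuous.isOpen_preimage _ (chartAt EY (f x₀)).open_source)
  have hA : ContMDiffOn 𝓘(ℝ, EX) 𝓘(ℝ, EX →L[ℝ] EY) (⊤ : ℕ∞) A U₁ := fun x hx =>
    (hf.contMDiffAt.mfderiv_const_of_mem_chartAt hx.1.2 hx.2).contMDiffWithinAt
  have hA₀ : Surjective (A x₀) := by
    intro w
    obtain ⟨u, hu⟩ := hsurj w
    have hAu := inTangentCoordinates_mfderiv_apply (f := f) (mem_chart_source EX x₀)
      (mem_chart_source EY (f x₀)) u
    erw [tangentCoordChange_self (mem_extChartAt_source (I := 𝓘(ℝ, EX)) x₀),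
      tangentCoordChange_self (mem_extChartAt_source (I := 𝓘(ℝ, EY)) (f x₀))] at hAu
    exact ⟨u, hAu.trans hu⟩
  obtain ⟨U, hUU₁, hU, hx₀U, σ, hσ, hAσ⟩ := exists_contMDiffOn_rightInverse hU₁ hA
    ⟨⟨hx₀W, mem_chart_source EX x₀⟩, mem_chart_source EY (f x₀)⟩ hA₀
  set b : X → EY := fun x => tangentCoordChange 𝓘(ℝ, EY) (f x) (f x₀) (f x) (y x)
  set θ : X → EX := fun x => tangentCoordChange 𝓘(ℝ, EX) x x₀ x (v x)
  set p : X → EX := fun x => θ x + σ x (b x - A x (θ x))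
  have hp : ∀ x ∈ U, ContMDiffAt 𝓘(ℝ, EX) 𝓘(ℝ, EX) (⊤ : ℕ∞) p x := by
    intro x hx
    have hx₁ := hUU₁ hx
    have hb : ContMDiffAt 𝓘(ℝ, EX) 𝓘(ℝ, EY) (⊤ : ℕ∞) b x :=
      (hy x).tangentCoordChange_snd hx₁.2
    have hθ : ContMDiffAt 𝓘(ℝ, EX) 𝓘(ℝ, EX) (⊤ : ℕ∞) θ x :=
      (hWv x hx₁.1.1).tangentCoordChange_snd hx₁.1.2
    exact hθ.add ((hσ.contMDiffAt (hU.mem_nhds hx)).clm_apply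
      (hb.sub ((hA.contMDiffAt (hU₁.mem_nhds hx₁)).clm_apply hθ)))
  refine ⟨U, hU.mem_nhds hx₀U, fun x => tangentCoordChange 𝓘(ℝ, EX) x₀ x x (p x),
    fun x hx => (contMDiffAt_tangentCoordChange_section (hUU₁ hx).1.2 (hp x hx)).contMDiffWithinAt,
    fun x hx => ?_⟩
  obtain ⟨⟨-, hxc⟩, hfx⟩ := hUU₁ hx
  have hAx : ∀ w, A x w = tangentCoordChange 𝓘(ℝ, EY) (f x) (f x₀) (f x)
      (mfderiv 𝓘(ℝ, EX) 𝓘(ℝ, EY) f x (tangentCoordChange 𝓘(ℝ, EX) x₀ x x w)) :=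
    inTangentCoordinates_mfderiv_apply hxc hfx
  have hmfderiv : ∀ w, mfderiv 𝓘(ℝ, EX) 𝓘(ℝ, EY) f x (tangentCoordChange 𝓘(ℝ, EX) x₀ x x w) =
      tangentCoordChange 𝓘(ℝ, EY) (f x₀) (f x) (f x) (A x w) := fun w => by
    erw [hAx, tangentCoordChange_tangentCoordChange (mem_chart_source EY (f x)) hfx]
  refine ⟨?_, fun hvx => ?_⟩
  · have hAp : A x (p x) = b x := by
      simp only [p, map_add, map_sub, hAσ x hx]
      abel
    rw [hmfderiv, hAp]
    exact tangentCoordChange_tangentCoordChange (mem_chart_source EY (f x)) hfx (y x)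
  · have hAθ : A x (θ x) = b x := by
      erw [hAx, tangentCoordChange_tangentCoordChange (mem_chart_source EX x) hxc, hvx]
    show tangentCoordChange 𝓘(ℝ, EX) x₀ x x (θ x + σ x (b x - A x (θ x))) = v x
    rw [hAθ, sub_self, map_zero, add_zero]
    exact tangentCoordChange_tangentCoordChange (mem_chart_source EX x) hxc (v x)

end Submersion

theorem mfderiv_apply_mfderiv_of_leftInverse
    {EX : Type*} [NormedAddCommGroup EX] [NormedSpace ℝ EX]
    {X : Type*} [TopologicalSpace X] [ChartedSpace EX X]
    {EY : Type*} [NormedAddCommGroup EY] [NormedSpace ℝ EY]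
    {Y : Type*} [TopologicalSpace Y] [ChartedSpace EY Y]
    {f : X → Y} {g : Y → X} (hfg : LeftInverse f g) {y : Y}
    (hf : MDifferentiableAt 𝓘(ℝ, EX) 𝓘(ℝ, EY) f (g y))
    (hg : MDifferentiableAt 𝓘(ℝ, EY) 𝓘(ℝ, EX) g y) (v : TangentSpace 𝓘(ℝ, EY) y) :
    mfderiv 𝓘(ℝ, EX) 𝓘(ℝ, EY) f (g y) (mfderiv 𝓘(ℝ, EY) 𝓘(ℝ, EX) g y v) = v := by
  rw [← mfderiv_comp_apply y hf hg, hfg.comp_eq_id, mfderiv_id]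
  rfl

namespace LieGroupoidStr

def starVectorsAt (S : LieGroupoidStr EG EM G M) (x : ∀ m : M, TangentSpace 𝓘(ℝ, EM) m) (g : G) :
    Set (TangentSpace 𝓘(ℝ, EG) g) :=
  {v | mfderiv 𝓘(ℝ, EG) 𝓘(ℝ, EM) S.src g v = x (S.src g) ∧
    ∀ m, S.one m = g → v = mfderiv 𝓘(ℝ, EM) 𝓘(ℝ, EG) S.one m (x m)}

theorem exists_local_starVector [T2Space G] [FiniteDimensional ℝ EG]
    (S : LieGroupoidStr EG EM G M) {x : ∀ m : M, TangentSpace 𝓘(ℝ, EM) m}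
    (hsub : ∀ g, Surjective (mfderiv 𝓘(ℝ, EG) 𝓘(ℝ, EM) S.src g))
    (hx : ContMDiff 𝓘(ℝ, EM) 𝓘(ℝ, EM).tangent (⊤ : ℕ∞)
      (fun m => (⟨m, x m⟩ : TangentBundle 𝓘(ℝ, EM) M))) (g₀ : G) :
    ∃ U ∈ 𝓝 g₀, ∃ ξ : ∀ g : G, TangentSpace 𝓘(ℝ, EG) g,
      ContMDiffOn 𝓘(ℝ, EG) 𝓘(ℝ, EG).tangent (⊤ : ℕ∞)
        (fun g => (⟨g, ξ g⟩ : TangentBundle 𝓘(ℝ, EG) G)) U ∧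
      ∀ g ∈ U, ξ g ∈ S.starVectorsAt x g := by
  have hxα := hx.comp S.smooth_src
  by_cases hg₀ : S.one (S.src g₀) = g₀
  · set Ψ : G → TangentBundle 𝓘(ℝ, EG) G := fun g =>
      tangentMap 𝓘(ℝ, EM) 𝓘(ℝ, EG) S.one ⟨S.src g, x (S.src g)⟩
    have hΨ : ContMDiff 𝓘(ℝ, EG) 𝓘(ℝ, EG).tangent (⊤ : ℕ∞) Ψ :=
      (S.smooth_one.contMDiff_tangentMap (by simp)).comp hxα
    set v : ∀ g : G, TangentSpace 𝓘(ℝ, EG) g := fun g => tangentCoordChange 𝓘(ℝ, EG) g₀ g g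
      (tangentCoordChange 𝓘(ℝ, EG) (Ψ g).proj g₀ (Ψ g).proj (Ψ g).2)
    set W := (chartAt EG g₀).source ∩ (fun g => S.one (S.src g)) ⁻¹' (chartAt EG g₀).source
    have hW : W ∈ 𝓝 g₀ := ((chartAt EG g₀).open_source.inter ((chartAt EG g₀).open_source.preimage
      (S.smooth_one.comp S.smooth_src).continuous)).mem_nhds
        ⟨mem_chart_source EG g₀,
          show S.one (S.src g₀) ∈ _ by rw [hg₀]; exact mem_chart_source EG g₀⟩
    have hv : ∀ g ∈ W, ContMDiffAt 𝓘(ℝ, EG) 𝓘(ℝ, EG).tangent (⊤ : ℕ∞)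
        (fun g => (⟨g, v g⟩ : TangentBundle 𝓘(ℝ, EG) G)) g := fun g hg =>
      contMDiffAt_tangentCoordChange_section hg.1 ((hΨ g).tangentCoordChange_snd hg.2)
    obtain ⟨U, hU, ξ, hξ, hlift⟩ := exists_contMDiffOn_lift_of_surjective_mfderiv S.smooth_src
      (hsub g₀) hxα (mem_of_superset hW hv)
    refine ⟨U ∩ W, inter_mem hU hW, ξ, hξ.mono inter_subset_left,
      fun g hg => ⟨(hlift g hg.1).1, ?_⟩⟩
    rintro m rfl
    have hv₁ : v (S.one m) = mfderiv 𝓘(ℝ, EM) 𝓘(ℝ, EG) S.one m (x m) := by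
      show tangentCoordChange 𝓘(ℝ, EG) g₀ (S.one m) (S.one m)
        (tangentCoordChange 𝓘(ℝ, EG) (S.one (S.src (S.one m))) g₀ (S.one (S.src (S.one m)))
          (mfderiv 𝓘(ℝ, EM) 𝓘(ℝ, EG) S.one (S.src (S.one m)) (x (S.src (S.one m))))) = _
      rw [S.src_one]
      exact tangentCoordChange_tangentCoordChange (mem_chart_source EG _) hg.2.1 _
    rw [← hv₁]
    refine (hlift _ hg.1).2 ?_
    rw [hv₁, mfderiv_apply_mfderiv_of_leftInverse S.src_one
      (S.smooth_src.mdifferentiableAt (by simp)) (S.smooth_one.mdifferentiableAt (by simp)),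
      S.src_one]
  · have hunits : IsOpen {g | S.one (S.src g) = g}ᶜ :=
      (isClosed_eq (S.smooth_one.comp S.smooth_src).continuous continuous_id).isOpen_compl
    obtain ⟨U, hU, ξ, hξ, hlift⟩ := exists_contMDiffOn_lift_of_surjective_mfderiv S.smooth_src
      (hsub g₀) hxα (v := fun _ => 0)
      (Eventually.of_forall fun g => contMDiff_zeroSection ℝ (TangentSpace 𝓘(ℝ, EG)) g)
    refine ⟨U ∩ {g | S.one (S.src g) = g}ᶜ, inter_mem hU (hunits.mem_nhds hg₀), ξ,
      hξ.mono inter_subset_left, fun g hg => ⟨(hlift g hg.1).1, ?_⟩⟩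
    rintro m rfl
    exact absurd (show S.one (S.src (S.one m)) = S.one m by rw [S.src_one]) hg.2

end LieGroupoidStr

theorem exists_star_vector_field
    [T2Space G] [SigmaCompactSpace G] [FiniteDimensional ℝ EG]
    (S : LieGroupoidStr EG EM G M)
    -- `α` is a submersion (it is automatically surjective, by `src_one`):
    (hsub : ∀ g, Function.Surjective (mfderiv 𝓘(ℝ, EG) 𝓘(ℝ, EM) S.src g))
    (x : ∀ m : M, TangentSpace 𝓘(ℝ, EM) m)
    (hx : ContMDiff 𝓘(ℝ, EM) 𝓘(ℝ, EM).tangent (⊤ : ℕ∞)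
      (fun m => (⟨m, x m⟩ : TangentBundle 𝓘(ℝ, EM) M))) :
    ∃ ξ : ∀ g : G, TangentSpace 𝓘(ℝ, EG) g,
      ContMDiff 𝓘(ℝ, EG) 𝓘(ℝ, EG).tangent (⊤ : ℕ∞)
        (fun g => (⟨g, ξ g⟩ : TangentBundle 𝓘(ℝ, EG) G)) ∧
      (∀ g, mfderiv 𝓘(ℝ, EG) 𝓘(ℝ, EM) S.src g (ξ g) = x (S.src g)) ∧
      (∀ m, ξ (S.one m) = mfderiv 𝓘(ℝ, EM) 𝓘(ℝ, EG) S.one m (x m)) := by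
  have hconv : ∀ g, Convex ℝ (S.starVectorsAt x g) := by
    rintro g v ⟨hv, hv₁⟩ w ⟨hw, hw₁⟩ a b - - hab
    refine ⟨by rw [map_add, map_smul, map_smul, hv, hw, ← add_smul, hab, one_smul], ?_⟩
    rintro m rfl
    rw [hv₁ m rfl, hw₁ m rfl, ← add_smul, hab, one_smul]
  obtain ⟨ξ, hξ⟩ := exists_contMDiffSection_forall_mem_convex_of_local 𝓘(ℝ, EG)
    (TangentSpace 𝓘(ℝ, EG)) (S.starVectorsAt x) hconv (S.exists_local_starVector hsub hx)
  exact ⟨ξ, ξ.contMDiff, fun g => (hξ g).1, fun m => (hξ (S.one m)).2 m rfl⟩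
end
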